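/- arXiv:1503.08383 — 4 statements merged into one kernel-verified Lean document; each statement's English description precedes it below -/
import Mathlib

section
/- Let M₁ and M₂ be real 2×2 Hurwitz matrices whose (2,2) entries (bottom-right entries) are strictly positive, and let c > 0. For r > 0 let G(r) be the real 4×4 block matrix [[M₁, −c·r·E], [−c·r·E, M₂]], where E is the 2×2 matrix with 1 in the top-left entry and zeros elsewhere. Then there exists r₀ > 0 such that for all r ≥ r₀, det(G(r)) < 0, and consequently G(r) has a real eigenvalue λ > 0; in particular G(r) is not Hurwitz. -/
/-!
Expanding the determinant gives
`det G(r) = det M₁ · det M₂ - (c r)² · (M₁)₂₂ (M₂)₂₂`, which is negative for large `r` since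
the bottom-right entries are positive. A real 4×4 matrix with negative determinant has a
positive real eigenvalue: its characteristic polynomial is monic and equals `det G(r) < 0` at
`0`, so it has a positive root by the intermediate value theorem. That root is also a complex
eigenvalue with nonnegative real part.
-/

/-- A real square matrix is Hurwitz if every complex eigenvalue has strictly
negative real part. -/
def Matrix.IsHurwitz {n : Type*} [Fintype n] [DecidableEq n]
    (M : Matrix n n ℝ) : Prop :=
  ∀ μ ∈ spectrum ℂ (M.map Complex.ofReal), μ.re < 0

open Polynomial Filter

theorem Polynomial.exists_pos_isRoot_of_eval_zero_neg {p : ℝ[X]} (hp : 0 < p.leadingCoeff)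
    (h0 : p.eval 0 < 0) : ∃ x, 0 < x ∧ p.IsRoot x := by
  have hdeg : 0 < p.degree := by
    by_contra! h
    rw [eq_C_of_degree_le_zero h, leadingCoeff_C] at hp
    rw [eq_C_of_degree_le_zero h, eval_C] at h0
    exact hp.not_gt h0
  obtain ⟨b, hb, hb0⟩ :=
    ((tendsto_atTop_of_leadingCoeff_nonneg p hdeg hp.le).eventually_gt_atTop 0
      |>.and (eventually_ge_atTop 0)).exists
  obtain ⟨x, hx, hpx⟩ := intermediate_value_Icc hb0 p.continuous.continuousOn ⟨h0.le, hb.le⟩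
  exact ⟨x, hx.1.lt_of_ne (by rintro rfl; exact h0.ne hpx), hpx⟩

namespace Matrix

variable {n : Type*} [Fintype n] [DecidableEq n]

theorem exists_pos_mem_spectrum_of_det_neg {A : Matrix n n ℝ} (hn : Even (Fintype.card n))
    (hA : A.det < 0) : ∃ lam : ℝ, 0 < lam ∧ lam ∈ spectrum ℝ A := by
  have h0 : A.charpoly.eval 0 = A.det := by
    rw [eval_charpoly, map_zero, zero_sub, det_neg, hn.neg_one_pow, one_mul]
  obtain ⟨lam, hlam, hroot⟩ := exists_pos_isRoot_of_eval_zero_neg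
    (by rw [A.charpoly_monic.leadingCoeff]; exact one_pos) (h0 ▸ hA)
  exact ⟨lam, hlam, mem_spectrum_iff_isRoot_charpoly.2 hroot⟩

theorem ofReal_mem_spectrum_map {A : Matrix n n ℝ} {lam : ℝ} (h : lam ∈ spectrum ℝ A) :
    (lam : ℂ) ∈ spectrum ℂ (A.map Complex.ofReal) := by
  rw [mem_spectrum_iff_isRoot_charpoly] at h ⊢
  exact (charpoly_map A Complex.ofRealHom).symm ▸ h.map

theorem not_isHurwitz_of_mem_spectrum {A : Matrix n n ℝ} {lam : ℝ} (h : lam ∈ spectrum ℝ A)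
    (hlam : 0 ≤ lam) : ¬ A.IsHurwitz := fun hA =>
  (hA _ (ofReal_mem_spectrum_map h)).not_ge hlam

theorem det_fromBlocks_neg_smul_single {R : Type*} [CommRing R]
    (M₁ M₂ : Matrix (Fin 2) (Fin 2) R) (k : R) :
    (fromBlocks M₁ (-k • !![1, 0; 0, 0]) (-k • !![1, 0; 0, 0]) M₂).det =
      M₁.det * M₂.det - k ^ 2 * (M₁ 1 1 * M₂ 1 1) := by
  have hreindex : (fromBlocks M₁ (-k • !![1, 0; 0, 0]) (-k • !![1, 0; 0, 0]) M₂).submatrix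
      finSumFinEquiv.symm finSumFinEquiv.symm =
      !![M₁ 0 0, M₁ 0 1, -k, 0;
         M₁ 1 0, M₁ 1 1, 0, 0;
         -k, 0, M₂ 0 0, M₂ 0 1;
         0, 0, M₂ 1 0, M₂ 1 1] := by
    ext i j
    fin_cases i <;> fin_cases j <;> simp <;> rfl
  rw [← det_submatrix_equiv_self finSumFinEquiv.symm, hreindex, det_fin_two M₁, det_fin_two M₂]
  simp [det_succ_row_zero, Fin.sum_univ_succ, Fin.succAbove]
  ring

end Matrix

theorem eventually_sub_mul_sq_neg (d : ℝ) {a : ℝ} (ha : 0 < a) :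
    ∀ᶠ r in atTop, d - a * r ^ 2 < 0 := by
  have : Tendsto (fun r : ℝ => d - a * r ^ 2) atTop atBot :=
    tendsto_atBot_add_const_left _ d
      (tendsto_neg_atTop_atBot.comp ((tendsto_pow_atTop two_ne_zero).const_mul_atTop ha))
  exact this.eventually_lt_atBot 0

theorem coupled_hurwitz_blocks_unstable_general (M₁ M₂ : Matrix (Fin 2) (Fin 2) ℝ)
    (h₁ : 0 < M₁ 1 1) (h₂ : 0 < M₂ 1 1) (c : ℝ) (hc : 0 < c)
    (E : Matrix (Fin 2) (Fin 2) ℝ) (hE : E = !![1, 0; 0, 0])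
    (G : ℝ → Matrix (Fin 2 ⊕ Fin 2) (Fin 2 ⊕ Fin 2) ℝ)
    (hG : ∀ r, G r = Matrix.fromBlocks M₁ (-(c * r) • E) (-(c * r) • E) M₂) :
    ∃ r₀ > (0 : ℝ), ∀ r ≥ r₀,
      (G r).det < 0 ∧ (∃ lam : ℝ, 0 < lam ∧ lam ∈ spectrum ℝ (G r)) ∧
        ¬ (G r).IsHurwitz := by
  have hdet : ∀ᶠ r in atTop, (G r).det < 0 := by
    filter_upwards [eventually_sub_mul_sq_neg (M₁.det * M₂.det)
      (by positivity : 0 < c ^ 2 * (M₁ 1 1 * M₂ 1 1))] with r hr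
    rw [hG, hE, Matrix.det_fromBlocks_neg_smul_single]
    linarith
  obtain ⟨r₀, hr₀⟩ := eventually_atTop.1 (hdet.and (eventually_gt_atTop 0))
  refine ⟨r₀, (hr₀ r₀ le_rfl).2, fun r hr => ?_⟩
  have hGr := (hr₀ r hr).1
  obtain ⟨lam, hlam, hspec⟩ := Matrix.exists_pos_mem_spectrum_of_det_neg (by decide) hGr
  exact ⟨hGr, ⟨lam, hlam, hspec⟩, Matrix.not_isHurwitz_of_mem_spectrum hspec hlam.le⟩

/-- Two individually stable (Hurwitz) 2×2 blocks with positive bottom-right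
entries, resistively coupled through `−c·r·E` (E the top-left unit matrix),
form a 4×4 system whose determinant is negative for all large enough `r`;
hence the coupled system has a positive real eigenvalue and is not Hurwitz. -/
theorem coupled_hurwitz_blocks_unstable (M₁ M₂ : Matrix (Fin 2) (Fin 2) ℝ)
    (hM₁ : M₁.IsHurwitz) (hM₂ : M₂.IsHurwitz)
    (h₁ : 0 < M₁ 1 1) (h₂ : 0 < M₂ 1 1) (c : ℝ) (hc : 0 < c)
    (E : Matrix (Fin 2) (Fin 2) ℝ) (hE : E = !![1, 0; 0, 0])
    (G : ℝ → Matrix (Fin 2 ⊕ Fin 2) (Fin 2 ⊕ Fin 2) ℝ)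
    (hG : ∀ r, G r = Matrix.fromBlocks M₁ (-(c * r) • E) (-(c * r) • E) M₂) :
    ∃ r₀ > (0 : ℝ), ∀ r ≥ r₀,
      (G r).det < 0 ∧ (∃ lam : ℝ, 0 < lam ∧ lam ∈ spectrum ℝ (G r)) ∧
        ¬ (G r).IsHurwitz :=
  coupled_hurwitz_blocks_unstable_general M₁ M₂ h₁ h₂ c hc E hE G hG
end

section
/- (Theorem 1: network instability of two cascaded converters.) Fix reals D ∈ (0,1], L > 0, C > 0, P > 0, V̄₁ > 0, V̄₂ > 0. For feedback gains f₁ = (f₁₁, f₁₂) ∈ ℝ² and f₂ = (f₂₁, f₂₂) ∈ ℝ² and for R > 0, define the real 4×4 closed-loop matrix Ã(R) with rows: row 1 = (−D·R/L + V̄₁·f₁₁/L, −1/L + V̄₁·f₁₂/L, −D·R/L, 0); row 2 = (1/C, P/(C·V̄₁²), 0, 0); row 3 = (−D·R/L, 0, −2·D·R/L + V̄₂·f₂₁/L, −1/L + V̄₂·f₂₂/L); row 4 = (0, 0, 1/C, P/(C·V̄₂²)). Suppose each converter is individually stable, i.e., for i = 1, 2 the standalone closed-loop matrix Mᵢ =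 [[V̄ᵢ·f_{i1}/L, −1/L + V̄ᵢ·f_{i2}/L], [1/C, P/(C·V̄ᵢ²)]] is Hurwitz. Then there exists R > 0 such that Ã(R) is not Hurwitz, i.e., Ã(R) has a complex eigenvalue with nonnegative real part. -/
open Polynomial

lemma Matrix.eval_charpoly'' {R : Type*} [CommRing R] {n : Type*} [Fintype n] [DecidableEq n]
    (M : Matrix n n R) (t : R) :
    M.charpoly.eval t = (t • (1 : Matrix n n R) - M).det := by
  rw [Matrix.charpoly, ← Polynomial.coe_evalRingHom, RingHom.map_det]
  congr 1
  ext i j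
  by_cases h : i = j <;>
    simp [h, Matrix.charmatrix_apply, Matrix.one_apply, Matrix.diagonal_apply,
      Matrix.sub_apply, Matrix.smul_apply]

lemma mem_spectrum_of_eval_eq_zero {n : Type*} [Fintype n] [DecidableEq n]
    (B : Matrix n n ℂ) (μ : ℂ) (h : B.charpoly.eval μ = 0) :
    μ ∈ spectrum ℂ B := by
  rw [spectrum.mem_iff]
  intro hu
  rw [Matrix.isUnit_iff_isUnit_det] at hu
  have hdet : (algebraMap ℂ (Matrix n n ℂ) μ - B).det = B.charpoly.eval μ := by
    rw [Matrix.eval_charpoly'', Algebra.algebraMap_eq_smul_one]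
  rw [hdet, h] at hu
  exact hu.ne_zero rfl

lemma exists_nonneg_real_eigenvalue {n : Type*} [Fintype n] [DecidableEq n]
    (M : Matrix n n ℝ) (hn : 0 < Fintype.card n) {x : ℝ} (hx : 0 ≤ x)
    (hev : M.charpoly.eval x ≤ 0) :
    ∃ μ ∈ spectrum ℂ (M.map Complex.ofReal), 0 ≤ μ.re := by
  have hmono := M.charpoly_monic
  have hdeg : 0 < M.charpoly.degree := by
    rw [Matrix.charpoly_degree_eq_dim]; exact_mod_cast hn
  have htend := Polynomial.tendsto_atTop_of_leadingCoeff_nonneg M.charpoly hdeg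
    (by rw [hmono.leadingCoeff]; norm_num)
  obtain ⟨y, hy1, hyx⟩ :=
    ((htend.eventually_ge_atTop 1).and (Filter.eventually_ge_atTop x)).exists
  have hcont : ContinuousOn (fun t => M.charpoly.eval t) (Set.Icc x y) :=
    (M.charpoly.continuous).continuousOn
  obtain ⟨z, hz, hz0⟩ := intermediate_value_Icc hyx hcont ⟨hev, by linarith⟩
  refine ⟨(z : ℂ), ?_, by simpa using le_trans hx hz.1⟩
  apply mem_spectrum_of_eval_eq_zero
  have hmap : (M.map Complex.ofReal).charpoly = M.charpoly.map Complex.ofRealHom :=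
    Matrix.charpoly_map M Complex.ofRealHom
  rw [hmap]
  rw [show ((z : ℂ)) = Complex.ofRealHom z from rfl, Polynomial.eval_map,
    Polynomial.eval₂_at_apply]
  simpa using hz0

lemma Matrix.IsHurwitz.charpoly_eval_pos {n : Type*} [Fintype n] [DecidableEq n]
    {M : Matrix n n ℝ} (h : M.IsHurwitz) (hn : 0 < Fintype.card n) {x : ℝ} (hx : 0 ≤ x) :
    0 < M.charpoly.eval x := by
  by_contra hle
  push_neg at hle
  obtain ⟨μ, hμ, hre⟩ := exists_nonneg_real_eigenvalue M hn hx hle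
  exact absurd (h μ hμ) (not_lt.mpr hre)


lemma det_fin_four' {R : Type*} [CommRing R] (M : Matrix (Fin 4) (Fin 4) R) :
    M.det =
      M 0 0 * (M 1 1 * (M 2 2 * M 3 3 - M 2 3 * M 3 2)
        - M 1 2 * (M 2 1 * M 3 3 - M 2 3 * M 3 1)
        + M 1 3 * (M 2 1 * M 3 2 - M 2 2 * M 3 1))
      - M 0 1 * (M 1 0 * (M 2 2 * M 3 3 - M 2 3 * M 3 2)
        - M 1 2 * (M 2 0 * M 3 3 - M 2 3 * M 3 0)
        + M 1 3 * (M 2 0 * M 3 2 - M 2 2 * M 3 0))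
      + M 0 2 * (M 1 0 * (M 2 1 * M 3 3 - M 2 3 * M 3 1)
        - M 1 1 * (M 2 0 * M 3 3 - M 2 3 * M 3 0)
        + M 1 3 * (M 2 0 * M 3 1 - M 2 1 * M 3 0))
      - M 0 3 * (M 1 0 * (M 2 1 * M 3 2 - M 2 2 * M 3 1)
        - M 1 1 * (M 2 0 * M 3 2 - M 2 2 * M 3 0)
        + M 1 2 * (M 2 0 * M 3 1 - M 2 1 * M 3 0)) := by
  rw [Matrix.det_succ_row_zero]
  simp [Fin.sum_univ_succ, Matrix.det_fin_three,
    show (Fin.succ 2 : Fin 4) = 3 from rfl, show (Fin.castSucc 2 : Fin 4) = 2 from rfl,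
    show ((0 : Fin 4).succAbove 2 : Fin 4) = 3 by rfl,
    show ((1 : Fin 4).succAbove 2 : Fin 4) = 3 by rfl,
    show ((2 : Fin 4).succAbove 2 : Fin 4) = 3 by rfl,
    show ((3 : Fin 4).succAbove 2 : Fin 4) = 2 by rfl]
  ring

lemma cascade_det (x a b₁ c₁ b₂ c₂ g p₁ p₂ : ℝ) :
    (x • (1 : Matrix (Fin 4) (Fin 4) ℝ)
      - !![-a + b₁, c₁, -a, 0; g, p₁, 0, 0; -a, 0, -(2 * a) + b₂, c₂; 0, 0, g, p₂]).det
    = ((x - p₁) * (x - p₂)) * a ^ 2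
      + ((x - p₁) * ((x - b₂) * (x - p₂) - c₂ * g)
          + 2 * (x - p₂) * ((x - b₁) * (x - p₁) - c₁ * g)) * a
      + ((x - b₁) * (x - p₁) - c₁ * g) * ((x - b₂) * (x - p₂) - c₂ * g) := by
  have hM : x • (1 : Matrix (Fin 4) (Fin 4) ℝ)
      - !![-a + b₁, c₁, -a, 0; g, p₁, 0, 0; -a, 0, -(2 * a) + b₂, c₂; 0, 0, g, p₂]
      = !![x - (-a + b₁), -c₁, a, 0; -g, x - p₁, 0, 0;
           a, 0, x - (-(2 * a) + b₂), -c₂; 0, 0, -g, x - p₂] := by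
    ext i j
    fin_cases i <;> fin_cases j <;>
      simp [Matrix.sub_apply, Matrix.smul_apply, Matrix.one_apply, Matrix.vecHead, Matrix.vecTail]
  rw [hM, det_fin_four']
  simp only [Matrix.cons_val', Matrix.cons_val_zero, Matrix.cons_val_one, Matrix.head_cons,
    Matrix.empty_val', Matrix.cons_val_fin_one, Matrix.head_fin_const, Matrix.cons_val_two,
    Matrix.tail_cons, Matrix.cons_val_three, Matrix.of_apply]
  ring

set_option maxHeartbeats 2000000 in
/-- Theorem 1 (network instability of two cascaded converters): even if each
converter is individually stabilized by linear state feedback of its own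
states, there is a line resistance `R > 0` for which the closed-loop network
matrix `Ã(R)` is not Hurwitz (it has an eigenvalue with nonnegative real
part). -/
theorem two_cascaded_converters_unstable
    (D L C P Vbar₁ Vbar₂ : ℝ) (hD : 0 < D ∧ D ≤ 1) (hL : 0 < L) (hC : 0 < C)
    (hP : 0 < P) (hV₁ : 0 < Vbar₁) (hV₂ : 0 < Vbar₂)
    (f₁₁ f₁₂ f₂₁ f₂₂ : ℝ)
    (Atilde : ℝ → Matrix (Fin 4) (Fin 4) ℝ)
    (hAtilde : ∀ R, Atilde R =
      !![-(D * R / L) + Vbar₁ * f₁₁ / L, -(1 / L) + Vbar₁ * f₁₂ / L,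
           -(D * R / L), 0;
         1 / C, P / (C * Vbar₁ ^ 2), 0, 0;
         -(D * R / L), 0, -(2 * D * R / L) + Vbar₂ * f₂₁ / L,
           -(1 / L) + Vbar₂ * f₂₂ / L;
         0, 0, 1 / C, P / (C * Vbar₂ ^ 2)])
    (hstable₁ : Matrix.IsHurwitz
      !![Vbar₁ * f₁₁ / L, -(1 / L) + Vbar₁ * f₁₂ / L;
         1 / C, P / (C * Vbar₁ ^ 2)])
    (hstable₂ : Matrix.IsHurwitz
      !![Vbar₂ * f₂₁ / L, -(1 / L) + Vbar₂ * f₂₂ / L;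
         1 / C, P / (C * Vbar₂ ^ 2)]) :
    ∃ R > (0 : ℝ), ¬ (Atilde R).IsHurwitz ∧
      ∃ μ ∈ spectrum ℂ ((Atilde R).map Complex.ofReal), 0 ≤ μ.re := by
  obtain ⟨hD0, -⟩ := hD
  set b₁ : ℝ := Vbar₁ * f₁₁ / L with hb₁def
  set c₁ : ℝ := -(1 / L) + Vbar₁ * f₁₂ / L with hc₁def
  set b₂ : ℝ := Vbar₂ * f₂₁ / L with hb₂def
  set c₂ : ℝ := -(1 / L) + Vbar₂ * f₂₂ / L with hc₂def
  set g : ℝ := 1 / C with hgdef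
  set p₁ : ℝ := P / (C * Vbar₁ ^ 2) with hp₁def
  set p₂ : ℝ := P / (C * Vbar₂ ^ 2) with hp₂def
  have hp₁pos : 0 < p₁ := by rw [hp₁def]; positivity
  have hp₂pos : 0 < p₂ := by rw [hp₂def]; positivity
  set x : ℝ := min p₁ p₂ / 2 with hxdef
  have hmin : 0 < min p₁ p₂ := lt_min hp₁pos hp₂pos
  have hx0 : 0 < x := by rw [hxdef]; linarith
  have hxp₁ : x < p₁ := by
    have := min_le_left p₁ p₂; rw [hxdef]; linarith
  have hxp₂ : x < p₂ := by
    have := min_le_right p₁ p₂; rw [hxdef]; linarith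
  -- standalone charpoly evaluations are positive
  have hE₁pos : 0 < (x - b₁) * (x - p₁) - c₁ * g := by
    have h := hstable₁.charpoly_eval_pos (by norm_num) hx0.le
    have heq : (!![b₁, c₁; g, p₁]).charpoly.eval x = (x - b₁) * (x - p₁) - c₁ * g := by
      rw [Matrix.eval_charpoly'', Matrix.det_fin_two]
      simp [Matrix.sub_apply, Matrix.smul_apply, Matrix.one_apply]
    rwa [heq] at h
  have hE₂pos : 0 < (x - b₂) * (x - p₂) - c₂ * g := by
    have h := hstable₂.charpoly_eval_pos (by norm_num) hx0.le
    have heq : (!![b₂, c₂; g, p₂]).charpoly.eval x = (x - b₂) * (x - p₂) - c₂ * g := by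
      rw [Matrix.eval_charpoly'', Matrix.det_fin_two]
      simp [Matrix.sub_apply, Matrix.smul_apply, Matrix.one_apply]
    rwa [heq] at h
  set E₁ : ℝ := (x - b₁) * (x - p₁) - c₁ * g with hE₁def
  set E₂ : ℝ := (x - b₂) * (x - p₂) - c₂ * g with hE₂def
  set K : ℝ := (x - p₁) * (x - p₂) with hKdef
  have hKpos : 0 < K := by
    rw [hKdef]; exact mul_pos_of_neg_of_neg (by linarith) (by linarith)
  set u : ℝ := (x - p₁) * E₂ with hudef
  set v : ℝ := 2 * (x - p₂) * E₁ with hvdef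
  have huneg : u < 0 := by
    rw [hudef]; exact mul_neg_of_neg_of_pos (by linarith) hE₂pos
  have hvneg : v < 0 := by
    rw [hvdef]; exact mul_neg_of_neg_of_pos (by nlinarith) hE₁pos
  set a : ℝ := -(u + v) / (2 * K) with hadef
  have hapos : 0 < a := by
    rw [hadef]; apply div_pos (by linarith) (by linarith)
  refine ⟨a * L / D, by positivity, ?_⟩
  set R : ℝ := a * L / D with hRdef
  have hDRL : D * R / L = a := by
    rw [hRdef]; field_simp
  -- key determinant identity
  have key : (Atilde R).charpoly.eval x = K * a ^ 2 + (u + v) * a + E₁ * E₂ := by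
    rw [hAtilde R, show (2 * D * R / L : ℝ) = 2 * a by rw [← hDRL]; ring, hDRL,
      Matrix.eval_charpoly'', cascade_det]
  clear_value b₁ c₁ b₂ c₂ g p₁ p₂ x E₁ E₂ K u v a R
  have hle : (Atilde R).charpoly.eval x ≤ 0 := by
    rw [key]
    have huv : u * v = 2 * K * (E₁ * E₂) := by rw [hudef, hvdef, hKdef]; ring
    have hE₁E₂ : E₁ * E₂ = u * v / (2 * K) := by
      rw [huv]; field_simp
    rw [hadef, hE₁E₂]
    have hK0 : (K : ℝ) ≠ 0 := ne_of_gt hKpos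
    have : K * (-(u + v) / (2 * K)) ^ 2 + (u + v) * (-(u + v) / (2 * K)) + u * v / (2 * K)
        = -(u ^ 2 + v ^ 2) / (4 * K) := by
      field_simp
      ring
    rw [this]
    apply div_nonpos_of_nonpos_of_nonneg
    · nlinarith
    · linarith
  obtain ⟨μ, hμ, hre⟩ := exists_nonneg_real_eigenvalue (Atilde R) (by norm_num) hx0.le hle
  refine ⟨fun h => ?_, μ, hμ, hre⟩
  exact absurd (h μ hμ) (not_lt.mpr hre)
end

section
/- (Theorem 2, output-shunt-resistor design.) Fix reals D ∈ (0,1], L > 0, C > 0, P > 0, V̄₁ > 0, V̄₂ > 0 and a shunt resistance R_s > 0. For feedback gains f₁, f₂ ∈ ℝ² and R > 0 define the real 4×4 closed-loop matrix Ã(R) with rows: row 1 = (−D·R/L + V̄₁·f₁₁/L, −1/L + V̄₁·f₁₂/L, −D·R/L, 0); row 2 = (1/C, P/(C·V̄₁²) − 1/(C·R_s), 0, 0); row 3 = (−D·R/L, 0, −2·D·R/L + V̄₂·f₂₁/L, −1/L + V̄₂·f₂₂/L); row 4 = (0, 0, 1/C, P/(C·V̄₂²) − 1/(C·R_s)). Then: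 (a) if P/(C·V̄ᵢ²) − 1/(C·R_s) > 0 for i = 1, 2, then for all feedback gains f₁, f₂ ∈ ℝ² such that the standalone blocks Mᵢ = [[V̄ᵢ·f_{i1}/L, −1/L + V̄ᵢ·f_{i2}/L], [1/C, P/(C·V̄ᵢ²) − 1/(C·R_s)]] are Hurwitz, there exists R > 0 such that Ã(R) is not Hurwitz; and (b) if instead 1/R_s > P/V̄ᵢ² for i = 1, 2, then the steady-state power dissipated in each shunt resistor satisfies V̄ᵢ²/R_s > P, i.e., the power lost in each shunt exceeds the load power, so at least half of the total power is dissipated in the shunt resistors. -/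
/-- The closed-loop matrix of two cascaded buck converters with CPLs, each
augmented with an output shunt resistor `R_s`, line resistance `R`, and
individual state feedbacks `f₁ = (f₁₁, f₁₂)`, `f₂ = (f₂₁, f₂₂)`. -/
noncomputable def shuntRNetwork (D L C P Vbar₁ Vbar₂ Rs f₁₁ f₁₂ f₂₁ f₂₂ R : ℝ) :
    Matrix (Fin 4) (Fin 4) ℝ :=
  !![-(D * R / L) + Vbar₁ * f₁₁ / L, -(1 / L) + Vbar₁ * f₁₂ / L,
       -(D * R / L), 0;
     1 / C, P / (C * Vbar₁ ^ 2) - 1 / (C * Rs), 0, 0;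
     -(D * R / L), 0, -(2 * D * R / L) + Vbar₂ * f₂₁ / L,
       -(1 / L) + Vbar₂ * f₂₂ / L;
     0, 0, 1 / C, P / (C * Vbar₂ ^ 2) - 1 / (C * Rs)]

/-!
If `B` is Hurwitz, the logarithmic derivative of its characteristic polynomial `χ` at `0` is
`χ'(0) = χ(0) · ∑ 1 / (-μ)` over the eigenvalues `μ`, and every `1 / (-μ)` has positive real part;
hence `χ₁ = χ₀ · s` with `s ≥ 0`. For the closed-loop matrix, with `r = D R / L` and `dᵢ > 0` the
voltage-row diagonal entries, `χ₀ = d₁ d₂ r² + O(r)` and `χ₁ = -(d₁ + d₂) r² + O(r)`, so a large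
line resistance gives `χ₀ > 0 > χ₁`, and the matrix cannot be Hurwitz, whatever the feedback gains.
-/

open Filter Polynomial

section Hurwitz

variable {n : Type*} [Fintype n] [DecidableEq n]

theorem Matrix.IsHurwitz.exists_charpoly_coeff_one_eq {B : Matrix n n ℝ} (hB : B.IsHurwitz) :
    ∃ s : ℝ, 0 ≤ s ∧ B.charpoly.coeff 1 = B.charpoly.coeff 0 * s := by
  set q := (B.map Complex.ofReal).charpoly
  have hq : q = B.charpoly.map Complex.ofRealHom := B.charpoly_map Complex.ofRealHom
  have hroot : ∀ μ ∈ q.roots, μ.re < 0 := fun μ hμ =>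
    hB μ (Matrix.mem_spectrum_iff_isRoot_charpoly.mpr (isRoot_of_mem_roots hμ))
  have hq0 : q.eval 0 ≠ 0 := fun h => by
    simpa using hroot 0 ((mem_roots (Matrix.charpoly_monic _).ne_zero).mpr h)
  have key : (B.charpoly.coeff 1 : ℂ) =
      B.charpoly.coeff 0 * (q.roots.map fun z ↦ (-z)⁻¹).sum := by
    have := (IsAlgClosed.splits q).eval_derivative_eq_eval_mul_sum hq0
    rw [← coeff_zero_eq_eval_zero, ← coeff_zero_eq_eval_zero, coeff_derivative] at this
    simpa [hq] using this
  refine ⟨(q.roots.map fun z ↦ ((-z)⁻¹).re).sum, Multiset.sum_nonneg fun x hx => ?_, ?_⟩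
  · obtain ⟨z, hz, rfl⟩ := Multiset.mem_map.mp hx
    rw [Complex.inv_re, Complex.neg_re]
    exact div_nonneg (neg_nonneg.mpr (hroot z hz).le) (Complex.normSq_nonneg _)
  · have := congrArg Complex.re key
    rwa [Complex.re_ofReal_mul, ← Complex.coe_reAddGroupHom, map_multiset_sum,
      Multiset.map_map] at this

theorem Matrix.not_isHurwitz_of_charpoly_coeff {B : Matrix n n ℝ}
    (h₀ : 0 < B.charpoly.coeff 0) (h₁ : B.charpoly.coeff 1 < 0) : ¬ B.IsHurwitz := fun hB => by
  obtain ⟨s, hs, hc⟩ := hB.exists_charpoly_coeff_one_eq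
  rw [hc] at h₁
  linarith [mul_nonneg h₀.le hs]

end Hurwitz

theorem eventually_atTop_quadratic_pos {a : ℝ} (ha : 0 < a) (b c : ℝ) :
    ∀ᶠ r in atTop, 0 < a * r ^ 2 + b * r + c := by
  have := (C a * X ^ 2 + C b * X + C c).tendsto_atTop_of_leadingCoeff_nonneg
    (by rw [degree_quadratic ha.ne']; decide) (by rw [leadingCoeff_quadratic ha.ne']; exact ha.le)
  simpa using this.eventually_gt_atTop 0

/-- The closed-loop matrix with `r = D R / L`, where `!![bᵢ, cᵢ; e, dᵢ]` are the standalone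
blocks. -/
def cascadeMatrix (b₁ c₁ d₁ b₂ c₂ d₂ e r : ℝ) : Matrix (Fin 4) (Fin 4) ℝ :=
  !![b₁ - r, c₁, -r, 0;
     e, d₁, 0, 0;
     -r, 0, b₂ - 2 * r, c₂;
     0, 0, e, d₂]

theorem cascadeMatrix_charpoly (b₁ c₁ d₁ b₂ c₂ d₂ e r : ℝ) :
    (cascadeMatrix b₁ c₁ d₁ b₂ c₂ d₂ e r).charpoly =
      X ^ 4 + C (3 * r - b₁ - d₁ - b₂ - d₂) * X ^ 3
      + C (r ^ 2 - (2 * b₁ + b₂ + 3 * d₁ + 3 * d₂) * r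
          + (b₁ + d₁) * (b₂ + d₂) + (b₁ * d₁ - c₁ * e) + (b₂ * d₂ - c₂ * e)) * X ^ 2
      + C (-(d₁ + d₂) * r ^ 2
          + (2 * (b₁ * d₁ - c₁ * e) + (b₂ * d₂ - c₂ * e) + 2 * b₁ * d₂ + b₂ * d₁ + 3 * d₁ * d₂) * r
          - ((b₁ + d₁) * (b₂ * d₂ - c₂ * e) + (b₂ + d₂) * (b₁ * d₁ - c₁ * e))) * X
      + C (d₁ * d₂ * r ^ 2 - (2 * d₂ * (b₁ * d₁ - c₁ * e) + d₁ * (b₂ * d₂ - c₂ * e)) * r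
          + (b₁ * d₁ - c₁ * e) * (b₂ * d₂ - c₂ * e)) := by
  refine Polynomial.funext fun x => ?_
  rw [Matrix.eval_charpoly, Matrix.det_succ_row_zero]
  simp only [Fin.sum_univ_succ, Matrix.det_fin_three,
    Matrix.submatrix_apply, Matrix.sub_apply, Matrix.scalar_apply, Matrix.diagonal_apply,
    cascadeMatrix, Matrix.of_apply, Matrix.cons_val', Matrix.cons_val, Matrix.cons_val_fin_one,
    Fin.succAbove, Fin.reduceSucc, Fin.reduceCastSucc, Fin.reduceLT, Fin.reduceEq,
    Fin.val_succ, Fin.coe_ofNat_eq_mod, if_true, if_false,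
    eval_add, eval_mul, eval_pow, eval_X, eval_C]
  ring

theorem eventually_cascadeMatrix_charpoly_coeff (b₁ c₁ b₂ c₂ e : ℝ) {d₁ d₂ : ℝ}
    (hd₁ : 0 < d₁) (hd₂ : 0 < d₂) :
    ∀ᶠ r in atTop, 0 < (cascadeMatrix b₁ c₁ d₁ b₂ c₂ d₂ e r).charpoly.coeff 0 ∧
      (cascadeMatrix b₁ c₁ d₁ b₂ c₂ d₂ e r).charpoly.coeff 1 < 0 := by
  filter_upwards [eventually_atTop_quadratic_pos (mul_pos hd₁ hd₂)
      (-(2 * d₂ * (b₁ * d₁ - c₁ * e) + d₁ * (b₂ * d₂ - c₂ * e)))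
      ((b₁ * d₁ - c₁ * e) * (b₂ * d₂ - c₂ * e)),
    eventually_atTop_quadratic_pos (add_pos hd₁ hd₂)
      (-(2 * (b₁ * d₁ - c₁ * e) + (b₂ * d₂ - c₂ * e) + 2 * b₁ * d₂ + b₂ * d₁ + 3 * d₁ * d₂))
      ((b₁ + d₁) * (b₂ * d₂ - c₂ * e) + (b₂ + d₂) * (b₁ * d₁ - c₁ * e))] with r h₀ h₁
  simp only [cascadeMatrix_charpoly, coeff_add, coeff_X_pow, coeff_C_mul_X_pow, coeff_C_mul_X,
    coeff_C, OfNat.zero_ne_ofNat, OfNat.one_ne_ofNat, zero_ne_one, one_ne_zero, if_true, if_false,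
    zero_add, add_zero]
  constructor <;> linarith

theorem shuntRNetwork_eq_cascadeMatrix (D L C P Vbar₁ Vbar₂ Rs f₁₁ f₁₂ f₂₁ f₂₂ R : ℝ) :
    shuntRNetwork D L C P Vbar₁ Vbar₂ Rs f₁₁ f₁₂ f₂₁ f₂₂ R =
      cascadeMatrix (Vbar₁ * f₁₁ / L) (-(1 / L) + Vbar₁ * f₁₂ / L)
        (P / (C * Vbar₁ ^ 2) - 1 / (C * Rs)) (Vbar₂ * f₂₁ / L) (-(1 / L) + Vbar₂ * f₂₂ / L)
        (P / (C * Vbar₂ ^ 2) - 1 / (C * Rs)) (1 / C) (D * R / L) := by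
  have h2 : 2 * D * R / L = 2 * (D * R / L) := by ring
  simp only [shuntRNetwork, cascadeMatrix, h2, neg_add_eq_sub]

theorem shunt_resistor_design_general
    (D L C P Vbar₁ Vbar₂ Rs : ℝ) (hD : 0 < D ∧ D ≤ 1) (hL : 0 < L)
    (hV₁ : 0 < Vbar₁) (hV₂ : 0 < Vbar₂)
    (hRs : 0 < Rs) :
    ((0 < P / (C * Vbar₁ ^ 2) - 1 / (C * Rs) ∧
      0 < P / (C * Vbar₂ ^ 2) - 1 / (C * Rs)) →
      ∀ f₁₁ f₁₂ f₂₁ f₂₂ : ℝ,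
        Matrix.IsHurwitz
          !![Vbar₁ * f₁₁ / L, -(1 / L) + Vbar₁ * f₁₂ / L;
             1 / C, P / (C * Vbar₁ ^ 2) - 1 / (C * Rs)] →
        Matrix.IsHurwitz
          !![Vbar₂ * f₂₁ / L, -(1 / L) + Vbar₂ * f₂₂ / L;
             1 / C, P / (C * Vbar₂ ^ 2) - 1 / (C * Rs)] →
        ∃ R > (0 : ℝ),
          ¬ (shuntRNetwork D L C P Vbar₁ Vbar₂ Rs f₁₁ f₁₂ f₂₁ f₂₂ R).IsHurwitz ∧
          ∃ μ ∈ spectrum ℂ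
            ((shuntRNetwork D L C P Vbar₁ Vbar₂ Rs f₁₁ f₁₂ f₂₁ f₂₂ R).map
              Complex.ofReal), 0 ≤ μ.re) ∧
    ((P / Vbar₁ ^ 2 < 1 / Rs ∧ P / Vbar₂ ^ 2 < 1 / Rs) →
      P < Vbar₁ ^ 2 / Rs ∧ P < Vbar₂ ^ 2 / Rs) := by
  refine ⟨fun ⟨hd₁, hd₂⟩ f₁₁ f₁₂ f₂₁ f₂₂ _ _ => ?_, fun ⟨h₁, h₂⟩ => ?_⟩
  · have hr : Tendsto (fun R => D * R / L) atTop atTop :=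
      (tendsto_id.const_mul_atTop hD.1).atTop_div_const hL
    obtain ⟨R, ⟨hc₀, hc₁⟩, hR⟩ := ((hr.eventually <| eventually_cascadeMatrix_charpoly_coeff
      _ _ _ _ _ hd₁ hd₂).and (eventually_gt_atTop 0)).exists
    rw [← shuntRNetwork_eq_cascadeMatrix] at hc₀ hc₁
    have hnot := Matrix.not_isHurwitz_of_charpoly_coeff hc₀ hc₁
    exact ⟨R, hR, hnot, by simpa [Matrix.IsHurwitz] using hnot⟩
  · have hshunt : ∀ V : ℝ, 0 < V → P / V ^ 2 < 1 / Rs → P < V ^ 2 / Rs := fun V hV h => by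
      rwa [div_lt_div_iff₀ (pow_pos hV 2) hRs, one_mul, ← lt_div_iff₀ hRs] at h
    exact ⟨hshunt _ hV₁ h₁, hshunt _ hV₂ h₂⟩

/-- Theorem 2 (output-shunt-resistor design): (a) if the shunt resistor is not
small enough to make the voltage-row diagonal entries negative, then for every
individually stabilizing feedback there is a line resistance making the
network not Hurwitz; (b) if the shunt resistor is small enough
(`1/R_s > P/V̄ᵢ²`), the power dissipated in each shunt exceeds the load power
`P`, so at least half of the total power is lost in the shunts. -/
theorem shunt_resistor_design
    (D L C P Vbar₁ Vbar₂ Rs : ℝ) (hD : 0 < D ∧ D ≤ 1) (hL : 0 < L)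
    (hC : 0 < C) (hP : 0 < P) (hV₁ : 0 < Vbar₁) (hV₂ : 0 < Vbar₂)
    (hRs : 0 < Rs) :
    ((0 < P / (C * Vbar₁ ^ 2) - 1 / (C * Rs) ∧
      0 < P / (C * Vbar₂ ^ 2) - 1 / (C * Rs)) →
      ∀ f₁₁ f₁₂ f₂₁ f₂₂ : ℝ,
        Matrix.IsHurwitz
          !![Vbar₁ * f₁₁ / L, -(1 / L) + Vbar₁ * f₁₂ / L;
             1 / C, P / (C * Vbar₁ ^ 2) - 1 / (C * Rs)] →
        Matrix.IsHurwitz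
          !![Vbar₂ * f₂₁ / L, -(1 / L) + Vbar₂ * f₂₂ / L;
             1 / C, P / (C * Vbar₂ ^ 2) - 1 / (C * Rs)] →
        ∃ R > (0 : ℝ),
          ¬ (shuntRNetwork D L C P Vbar₁ Vbar₂ Rs f₁₁ f₁₂ f₂₁ f₂₂ R).IsHurwitz ∧
          ∃ μ ∈ spectrum ℂ
            ((shuntRNetwork D L C P Vbar₁ Vbar₂ Rs f₁₁ f₁₂ f₂₁ f₂₂ R).map
              Complex.ofReal), 0 ≤ μ.re) ∧
    ((P / Vbar₁ ^ 2 < 1 / Rs ∧ P / Vbar₂ ^ 2 < 1 / Rs) →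
      P < Vbar₁ ^ 2 / Rs ∧ P < Vbar₂ ^ 2 / Rs) :=
  shunt_resistor_design_general D L C P Vbar₁ Vbar₂ Rs hD hL hV₁ hV₂ hRs
end

section
/- (Theorem 2, input-RC-filter design cannot stabilize: generalized Theorem 1.) Fix reals D ∈ (0,1], L > 0, C > 0, p₁ > 0, p₂ > 0. Then for all reals a₁, b₁, a₂, b₂ (arbitrary modifications, by feedback and/or input-side passive filtering, of the inductor-current rows), there exists R₀ > 0 such that for all R ≥ R₀ the real 4×4 matrix with rows: row 1 = (−D·R/L + a₁, b₁, −D·R/L, 0); row 2 = (1/C, p₁, 0, 0); row 3 = (−D·R/L, 0, −2·D·R/L + a₂, b₂); row 4 = (0, 0, 1/C, p₂) is not Hurwitz, i.e., it has a complex eigenvalue with nonnegative real part. -/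
/-!
If every eigenvalue `λᵢ` of a real matrix has negative real part, the two lowest coefficients of
its characteristic polynomial satisfy `c₁ = c₀ ∑ (-λᵢ)⁻¹` with `Re (-λᵢ)⁻¹ > 0`, so `c₀ c₁ ≥ 0`.
For the network matrix, with `d = D R / L`, one finds `c₀ = p₁ p₂ d² + O(d)` and
`c₁ = -(p₁ + p₂) d² + O(d)` whatever `a₁, b₁, a₂, b₂` are, so `c₀ > 0 > c₁` once `R` is large.
-/

open Filter Polynomial

theorem Polynomial.coeff_one_multiset_prod_X_sub_C {K : Type*} [Field K] (s : Multiset K)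
    (hs : ∀ a ∈ s, a ≠ 0) :
    (s.map (fun a ↦ X - C a)).prod.coeff 1 =
      (s.map (fun a ↦ X - C a)).prod.coeff 0 * (s.map fun a ↦ (-a)⁻¹).sum := by
  induction s using Multiset.induction_on with
  | empty => simp [coeff_one]
  | cons a s ih =>
    have ha : a ≠ 0 := hs a (Multiset.mem_cons_self a s)
    rw [Multiset.map_cons, Multiset.prod_cons, mul_comm, coeff_mul_X_sub_C,
      ih fun b hb ↦ hs b (Multiset.mem_cons_of_mem hb), coeff_zero_eq_eval_zero,
      coeff_zero_eq_eval_zero]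
    simp only [eval_mul, eval_sub, eval_X, eval_C, Multiset.map_cons, Multiset.sum_cons]
    field_simp
    ring

theorem Complex.inv_re_pos {z : ℂ} (hz : 0 < z.re) : 0 < z⁻¹.re := by
  rw [Complex.inv_re]
  exact div_pos hz (Complex.normSq_pos.2 fun h ↦ by simp [h] at hz)

theorem Matrix.IsHurwitz.charpoly_coeff_zero_mul_coeff_one_nonneg {n : Type*} [Fintype n]
    [DecidableEq n] {M : Matrix n n ℝ} (hM : M.IsHurwitz) :
    0 ≤ M.charpoly.coeff 0 * M.charpoly.coeff 1 := by
  set A := M.map Complex.ofReal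
  have hA : A.charpoly = M.charpoly.map Complex.ofRealHom := M.charpoly_map Complex.ofRealHom
  have hcoeff_map (k : ℕ) : A.charpoly.coeff k = M.charpoly.coeff k := by
    rw [hA, coeff_map, Complex.ofRealHom_eq_coe]
  have hroots : ∀ z ∈ A.charpoly.roots, z.re < 0 := fun z hz ↦
    hM z (Matrix.mem_spectrum_of_isRoot_charpoly (isRoot_of_mem_roots hz))
  have hcoeff := coeff_one_multiset_prod_X_sub_C A.charpoly.roots fun z hz h ↦ by
    simpa [h] using hroots z hz
  rw [← (IsAlgClosed.splits A.charpoly).eq_prod_roots_of_monic A.charpoly_monic,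
    hcoeff_map, hcoeff_map] at hcoeff
  have hsum : 0 ≤ (A.charpoly.roots.map fun z ↦ (-z)⁻¹).sum.re := by
    rw [← Complex.coe_reAddGroupHom, map_multiset_sum, Multiset.map_map]
    refine Multiset.sum_nonneg fun x hx ↦ ?_
    obtain ⟨z, hz, rfl⟩ := Multiset.mem_map.1 hx
    exact (Complex.inv_re_pos (by simpa using hroots z hz)).le
  have hre := congrArg Complex.re hcoeff
  simp only [Complex.ofReal_re, Complex.re_ofReal_mul] at hre
  rw [hre, ← mul_assoc]
  exact mul_nonneg (mul_self_nonneg _) hsum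

theorem Matrix.not_isHurwitz_of_charpoly_coeff_zero_pos_of_coeff_one_neg {n : Type*}
    [Fintype n] [DecidableEq n] {M : Matrix n n ℝ} (h₀ : 0 < M.charpoly.coeff 0)
    (h₁ : M.charpoly.coeff 1 < 0) : ¬ M.IsHurwitz := fun hM ↦
  (mul_neg_of_pos_of_neg h₀ h₁).not_ge hM.charpoly_coeff_zero_mul_coeff_one_nonneg

section CoupledBlocks

variable {R : Type*} [CommRing R] (a b c p e f a' b' c' p' : R)

theorem Matrix.charpoly_fin_four_coupled :
    (!![a, b, e, 0; c, p, 0, 0; f, 0, a', b'; 0, 0, c', p'] : Matrix (Fin 4) (Fin 4) R).charpoly =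
      ((X - C a) * (X - C p) - C (b * c)) * ((X - C a') * (X - C p') - C (b' * c'))
        - C (e * f) * ((X - C p) * (X - C p')) := by
  rw [Matrix.charpoly, Matrix.det_succ_row_zero]
  simp [Fin.sum_univ_succ, Matrix.det_fin_three, Fin.succAbove, Matrix.charmatrix_apply,
    Matrix.diagonal]
  ring

theorem Matrix.charpoly_fin_four_coupled_coeff_zero :
    (!![a, b, e, 0; c, p, 0, 0; f, 0, a', b'; 0, 0, c', p'] :
        Matrix (Fin 4) (Fin 4) R).charpoly.coeff 0 =
      (a * p - b * c) * (a' * p' - b' * c') - e * f * (p * p') := by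
  simp [Matrix.charpoly_fin_four_coupled, coeff_zero_eq_eval_zero]

theorem Matrix.charpoly_fin_four_coupled_coeff_one :
    (!![a, b, e, 0; c, p, 0, 0; f, 0, a', b'; 0, 0, c', p'] :
        Matrix (Fin 4) (Fin 4) R).charpoly.coeff 1 =
      -(a + p) * (a' * p' - b' * c') - (a * p - b * c) * (a' + p') + e * f * (p + p') := by
  simp [Matrix.charpoly_fin_four_coupled, coeff_mul, Finset.Nat.antidiagonal_succ, coeff_X,
    coeff_C]
  ring

end CoupledBlocks

theorem eventually_quadratic_pos {a : ℝ} (ha : 0 < a) (b c : ℝ) :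
    ∀ᶠ x in atTop, 0 < a * x ^ 2 + b * x + c := by
  have h := (C a * X ^ 2 + C b * X + C c).tendsto_atTop_of_leadingCoeff_nonneg
    (by rw [degree_quadratic ha.ne']; norm_num) (by rw [leadingCoeff_quadratic ha.ne']; exact ha.le)
  filter_upwards [h.eventually_gt_atTop 0] with x hx
  simpa using hx

theorem input_RC_filter_cannot_stabilize_general
    (D L C p₁ p₂ : ℝ) (hD : 0 < D ∧ D ≤ 1) (hL : 0 < L)
    (hp₁ : 0 < p₁) (hp₂ : 0 < p₂) :
    ∀ a₁ b₁ a₂ b₂ : ℝ, ∃ R₀ > (0 : ℝ), ∀ R ≥ R₀,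
      ¬ Matrix.IsHurwitz
          !![-(D * R / L) + a₁, b₁, -(D * R / L), 0;
             1 / C, p₁, 0, 0;
             -(D * R / L), 0, -(2 * D * R / L) + a₂, b₂;
             0, 0, 1 / C, p₂] ∧
      ∃ μ ∈ spectrum ℂ
        ((!![-(D * R / L) + a₁, b₁, -(D * R / L), 0;
             1 / C, p₁, 0, 0;
             -(D * R / L), 0, -(2 * D * R / L) + a₂, b₂;
             0, 0, 1 / C, p₂] : Matrix (Fin 4) (Fin 4) ℝ).map
          Complex.ofReal), 0 ≤ μ.re := by
  intro a₁ b₁ a₂ b₂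
  set u := a₁ * p₁ - b₁ * (1 / C)
  set v := a₂ * p₂ - b₂ * (1 / C)
  set s := a₁ + p₁
  set t := a₂ + p₂
  have hd : Tendsto (fun R ↦ D * R / L) atTop atTop :=
    (tendsto_id.const_mul_atTop hD.1).atTop_div_const hL
  -- `c₀` and `-c₁`, expanded as quadratics in `d = D R / L`
  obtain ⟨R₀, hR₀⟩ := eventually_atTop.1 <| hd.eventually <|
    (eventually_quadratic_pos (mul_pos hp₁ hp₂) (-(p₁ * v + 2 * p₂ * u)) (u * v)).and
      (eventually_quadratic_pos (add_pos hp₁ hp₂) (-(v + 2 * p₂ * s + p₁ * t + 2 * u))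
        (s * v + u * t))
  refine ⟨max R₀ 1, by positivity, fun R hR ↦ ?_⟩
  obtain ⟨hc₀, hc₁⟩ := hR₀ R (le_of_max_le_left hR)
  refine (fun hM ↦ ⟨hM, by simpa [Matrix.IsHurwitz] using hM⟩) ?_
  apply Matrix.not_isHurwitz_of_charpoly_coeff_zero_pos_of_coeff_one_neg
  · rw [Matrix.charpoly_fin_four_coupled_coeff_zero]
    linear_combination hc₀
  · rw [Matrix.charpoly_fin_four_coupled_coeff_one]
    linear_combination hc₁

/-- Theorem 2 (input-RC-filter design cannot stabilize): whatever modifications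
`a₁, b₁, a₂, b₂` are made to the inductor-current rows (by feedback and/or
input-side passive filtering), as long as the capacitor-voltage rows
`(1/C, pᵢ)` with `pᵢ > 0` are unchanged, the network matrix is not Hurwitz for
all sufficiently large line resistance `R`. -/
theorem input_RC_filter_cannot_stabilize
    (D L C p₁ p₂ : ℝ) (hD : 0 < D ∧ D ≤ 1) (hL : 0 < L) (hC : 0 < C)
    (hp₁ : 0 < p₁) (hp₂ : 0 < p₂) :
    ∀ a₁ b₁ a₂ b₂ : ℝ, ∃ R₀ > (0 : ℝ), ∀ R ≥ R₀,
      ¬ Matrix.IsHurwitz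
          !![-(D * R / L) + a₁, b₁, -(D * R / L), 0;
             1 / C, p₁, 0, 0;
             -(D * R / L), 0, -(2 * D * R / L) + a₂, b₂;
             0, 0, 1 / C, p₂] ∧
      ∃ μ ∈ spectrum ℂ
        ((!![-(D * R / L) + a₁, b₁, -(D * R / L), 0;
             1 / C, p₁, 0, 0;
             -(D * R / L), 0, -(2 * D * R / L) + a₂, b₂;
             0, 0, 1 / C, p₂] : Matrix (Fin 4) (Fin 4) ℝ).map
          Complex.ofReal), 0 ≤ μ.re :=
  input_RC_filter_cannot_stabilize_general D L C p₁ p₂ hD hL hp₁ hp₂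
end
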